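/- arXiv:2110.11833 — 5 statements merged into one kernel-verified Lean document; each statement's English description precedes it below -/
import Mathlib

section
/- Let 0 < a < b and define C(t) = (1+√(r(t)))²/(2(b²+t²)) with r(t) = (b²+t²)/(a²+t²). Then (2b/π) ∫₀^∞ C(t) dt ≤ (1/2)(1 + √(b/a))². -/
/-!
Since `(1 + √(Y/X))² / (2Y) = 1/(2Y) + 1/(2X) + 1/√(XY)` and, for any weight
`λ > 0`, `2/√(XY) ≤ λ/Y + λ⁻¹/X` (AM–GM), the integrand is dominated by a combination of
`(b² + t²)⁻¹` and `(a² + t²)⁻¹`, whose integrals over `(0, ∞)` are `π/(2b)` and `π/(2a)`.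
The weight `λ = √(b/a)` balances the two terms and gives exactly `(1 + √(b/a))²/2`.
-/

open MeasureTheory Real Set

lemma inv_sq_add_sq_eq (c x : ℝ) (hc : c ≠ 0) :
    (c ^ 2 + x ^ 2)⁻¹ = (c ^ 2)⁻¹ * (1 + (c⁻¹ * x) ^ 2)⁻¹ := by
  field_simp

lemma integrableOn_inv_sq_add_sq_Ioi {c : ℝ} (hc : 0 < c) :
    IntegrableOn (fun x : ℝ => (c ^ 2 + x ^ 2)⁻¹) (Ioi 0) := by
  have h : IntegrableOn (fun x : ℝ => (1 + (c⁻¹ * x) ^ 2)⁻¹) (Ioi 0) :=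
    (integrableOn_Ioi_comp_mul_left_iff (fun x : ℝ => (1 + x ^ 2)⁻¹) 0 (inv_pos.2 hc)).2
      integrable_inv_one_add_sq.integrableOn
  simp_rw [inv_sq_add_sq_eq _ _ hc.ne']
  exact h.const_mul (c ^ 2)⁻¹

lemma integral_inv_sq_add_sq_Ioi {c : ℝ} (hc : 0 < c) :
    ∫ x in Ioi (0 : ℝ), (c ^ 2 + x ^ 2)⁻¹ = π / (2 * c) := by
  simp_rw [inv_sq_add_sq_eq _ _ hc.ne']
  rw [integral_const_mul, integral_comp_mul_left_Ioi (fun x => (1 + x ^ 2)⁻¹) 0 (inv_pos.2 hc)]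
  simp only [mul_zero, integral_Ioi_inv_one_add_sq, arctan_zero, sub_zero, smul_eq_mul]
  field_simp

lemma two_div_mul_le_div_sq_add_inv_div_sq {u v l : ℝ} (hu : 0 < u) (hv : 0 < v) (hl : 0 < l) :
    2 / (u * v) ≤ l / v ^ 2 + l⁻¹ / u ^ 2 := by
  have hgap :
      l / v ^ 2 + l⁻¹ / u ^ 2 - 2 / (u * v) = (l * u - v) ^ 2 / (l * u ^ 2 * v ^ 2) := by
    field_simp
    ring
  have : 0 ≤ (l * u - v) ^ 2 / (l * u ^ 2 * v ^ 2) := by positivity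
  linarith

lemma one_add_sqrt_div_sq_div_le {X Y l : ℝ} (hX : 0 < X) (hY : 0 < Y) (hl : 0 < l) :
    (1 + √(Y / X)) ^ 2 / (2 * Y) ≤ (1 + l) / 2 * Y⁻¹ + (1 + l⁻¹) / 2 * X⁻¹ := by
  obtain ⟨u, hu, rfl⟩ : ∃ u, 0 < u ∧ u ^ 2 = X := ⟨√X, sqrt_pos.2 hX, sq_sqrt hX.le⟩
  obtain ⟨v, hv, rfl⟩ : ∃ v, 0 < v ∧ v ^ 2 = Y := ⟨√Y, sqrt_pos.2 hY, sq_sqrt hY.le⟩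
  have hsqrt : √(v ^ 2 / u ^ 2) = v / u := by rw [← div_pow, sqrt_sq (by positivity)]
  have hexpand :
      (1 + v / u) ^ 2 / (2 * v ^ 2) = 1 / (2 * v ^ 2) + 1 / (2 * u ^ 2) + 1 / (u * v) := by
    field_simp
    ring
  have := two_div_mul_le_div_sq_add_inv_div_sq hu hv hl
  rw [hsqrt, hexpand]
  field_simp at this ⊢
  linarith

lemma setIntegral_one_add_sqrt_div_sq_div_le {a b l : ℝ} (ha : 0 < a) (hb : 0 < b) (hl : 0 < l) :
    ∫ t in Ioi (0 : ℝ), (1 + √((b ^ 2 + t ^ 2) / (a ^ 2 + t ^ 2))) ^ 2 / (2 * (b ^ 2 + t ^ 2)) ≤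
      (1 + l) / 2 * (π / (2 * b)) + (1 + l⁻¹) / 2 * (π / (2 * a)) := by
  have hIb := (integrableOn_inv_sq_add_sq_Ioi hb).const_mul ((1 + l) / 2)
  have hIa := (integrableOn_inv_sq_add_sq_Ioi ha).const_mul ((1 + l⁻¹) / 2)
  calc _ ≤ ∫ t in Ioi (0 : ℝ),
          ((1 + l) / 2 * (b ^ 2 + t ^ 2)⁻¹ + (1 + l⁻¹) / 2 * (a ^ 2 + t ^ 2)⁻¹) :=
        integral_mono_of_nonneg (.of_forall fun t => by positivity) (hIb.add hIa)
          (.of_forall fun t => one_add_sqrt_div_sq_div_le (by positivity) (by positivity) hl)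
    _ = _ := by
        rw [integral_add hIb hIa, integral_const_mul, integral_const_mul,
          integral_inv_sq_add_sq_Ioi hb, integral_inv_sq_add_sq_Ioi ha]

/-- (2b/π) ∫₀^∞ C(t) dt ≤ (1/2)(1 + √(b/a))², where
C(t) = (1+√(r(t)))²/(2(b²+t²)) and r(t) = (b²+t²)/(a²+t²). -/
theorem C_integral_bound (a b : ℝ) (ha : 0 < a) (hab : a < b) :
    (2 * b / Real.pi) *
        ∫ t in Set.Ioi (0 : ℝ),
          (1 + Real.sqrt ((b^2 + t^2) / (a^2 + t^2)))^2 / (2 * (b^2 + t^2)) ≤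
      (1 / 2) * (1 + Real.sqrt (b / a))^2 := by
  have hb : 0 < b := ha.trans hab
  set w := √(b / a)
  have hw : 0 < w := sqrt_pos.2 (div_pos hb ha)
  have hba : b = a * w ^ 2 := by rw [sq_sqrt (div_pos hb ha).le]; field_simp
  calc _ ≤ (2 * b / π) * ((1 + w) / 2 * (π / (2 * b)) + (1 + w⁻¹) / 2 * (π / (2 * a))) :=
        mul_le_mul_of_nonneg_left (setIntegral_one_add_sqrt_div_sq_div_le ha hb hw)
          (by positivity)
    _ = _ := by
        rw [hba]
        field_simp
        ring
end

section
/- Let 0 < a < b and define q(t) = (√(b²+t²) - √(a²+t²))/(√(b²+t²) + √(a²+t²)). For any real α > 0 and all t ≥ 0, q(t)^α ≤ exp(-α t²(C₁ - C₂ t²)) · q(0)^α, where C₁ = 1/(2ab) and C₂ = (a² + ab + b²)/(8a³b³). -/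
set_option maxHeartbeats 1000000

theorem sqrt_lb (c x : ℝ) (hc : 0 < c) (hx : 0 ≤ x) :
    c + x/(2*c) - x^2/(8*c^3) ≤ Real.sqrt (c^2 + x) := by
  set L : ℝ := c + x/(2*c) - x^2/(8*c^3) with hL
  rcases le_or_gt L 0 with h | h
  · exact h.trans (Real.sqrt_nonneg _)
  · rw [← Real.sqrt_sq h.le]
    apply Real.sqrt_le_sqrt
    have h1 : L * (8*c^3) = 8*c^4 + 4*c^2*x - x^2 := by rw [hL]; field_simp; ring
    have hpos : 0 < 8*c^4 + 4*c^2*x - x^2 := by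
      rw [← h1]; positivity
    have hx8 : x ≤ 8*c^2 := by nlinarith
    have key : L^2 * (64*c^6) ≤ (c^2+x) * (64*c^6) := by
      have h2 : L^2*(64*c^6) = (8*c^4 + 4*c^2*x - x^2)^2 := by
        rw [← h1]; ring
      rw [h2]
      nlinarith [mul_nonneg (mul_nonneg (mul_nonneg hx hx) hx) (sub_nonneg.mpr hx8)]
    have h64 : (0:ℝ) < 64*c^6 := by positivity
    exact le_of_mul_le_mul_right key h64

theorem key_ineq (a b x : ℝ) (ha : 0 < a) (hab : a < b) (hx : 0 ≤ x) :
    a + b ≤ (Real.sqrt (a^2+x) + Real.sqrt (b^2+x)) *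
      (1 - x/(2*a*b) + (a^2+a*b+b^2)/(8*a^3*b^3) * x^2) := by
  have hb : 0 < b := ha.trans hab
  have hla := sqrt_lb a x ha hx
  have hlb := sqrt_lb b x hb hx
  set u := Real.sqrt (a^2+x) with hu
  set v := Real.sqrt (b^2+x) with hv
  set Q : ℝ := 1 - x/(2*a*b) + (a^2+a*b+b^2)/(8*a^3*b^3) * x^2 with hQdef
  have hau : a ≤ u := by
    nlinarith [Real.sq_sqrt (by positivity : (0:ℝ) ≤ a^2 + x),
      Real.sqrt_nonneg (a^2+x), sq_nonneg (Real.sqrt (a^2+x) - a)]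
  have hbv : b ≤ v := by
    nlinarith [Real.sq_sqrt (by positivity : (0:ℝ) ≤ b^2 + x),
      Real.sqrt_nonneg (b^2+x), sq_nonneg (Real.sqrt (b^2+x) - b)]
  have hQ8 : Q * (8*a^3*b^3) = 8*a^3*b^3 - 4*a^2*b^2*x + (a^2+a*b+b^2)*x^2 := by
    rw [hQdef]; field_simp; ring
  have hQ0 : 0 ≤ Q := by
    have h8 : (0:ℝ) < 8*a^3*b^3 := by positivity
    have : 0 ≤ 8*a^3*b^3 - 4*a^2*b^2*x + (a^2+a*b+b^2)*x^2 := by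
      nlinarith [sq_nonneg (x*(a^2+a*b+b^2) - 2*a^2*b^2), sq_nonneg (a*b), sq_nonneg x,
        mul_pos ha hb, sq_nonneg (a-b), sq_nonneg (a+b)]
    nlinarith
  rcases le_or_gt x (4*a^2*b^2/(a^2+a*b+b^2)) with hsm | hlg
  · have hs : x * (a^2+a*b+b^2) ≤ 4*a^2*b^2 :=
      (le_div_iff₀ (by positivity : (0:ℝ) < a^2+a*b+b^2)).mp hsm
    have hstep : (a + x/(2*a) - x^2/(8*a^3) + (b + x/(2*b) - x^2/(8*b^3))) * Q ≤ (u+v)*Q := by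
      apply mul_le_mul_of_nonneg_right _ hQ0
      linarith
    refine le_trans ?_ hstep
    have hid : ((a + x/(2*a) - x^2/(8*a^3) + (b + x/(2*b) - x^2/(8*b^3))) * Q - (a+b))
          * (64*a^6*b^6) =
        x^3 * (4*a^2*b^2*((a+b)*(a^2+a*b+b^2) + (a^3+b^3))
          - (a^3+b^3)*(a^2+a*b+b^2)*x) := by
      rw [hQdef]; field_simp; ring
    have hfac : 0 ≤ x^3 * (4*a^2*b^2*((a+b)*(a^2+a*b+b^2) + (a^3+b^3))
          - (a^3+b^3)*(a^2+a*b+b^2)*x) := by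
      apply mul_nonneg (by positivity)
      have h3 : (0:ℝ) ≤ a^3+b^3 := by positivity
      have h4 : (0:ℝ) ≤ 4*a^2*b^2*((a+b)*(a^2+a*b+b^2)) := by positivity
      linarith [mul_le_mul_of_nonneg_left hs h3]
    have h64 : (0:ℝ) < 64*a^6*b^6 := by positivity
    have h' : 0 * (64*a^6*b^6) ≤
        ((a + x/(2*a) - x^2/(8*a^3) + (b + x/(2*b) - x^2/(8*b^3))) * Q - (a+b))
          * (64*a^6*b^6) := by
      rw [hid, zero_mul]; exact hfac
    have hE := le_of_mul_le_mul_right h' h64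
    linarith
  · have hQ1 : 1 ≤ Q := by
      have h8 : (0:ℝ) < 8*a^3*b^3 := by positivity
      have hs : 4*a^2*b^2 ≤ (a^2+a*b+b^2)*x := by
        rw [div_lt_iff₀ (by positivity : (0:ℝ) < a^2+a*b+b^2)] at hlg
        nlinarith
      have : 8*a^3*b^3 ≤ 8*a^3*b^3 - 4*a^2*b^2*x + (a^2+a*b+b^2)*x^2 := by
        nlinarith [mul_le_mul_of_nonneg_right hs hx]
      nlinarith
    calc a + b ≤ (u+v) * 1 := by rw [mul_one]; linarith
      _ ≤ (u+v)*Q := by apply mul_le_mul_of_nonneg_left hQ1; linarith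

/-- q(t) = (√(b²+t²) - √(a²+t²))/(√(b²+t²) + √(a²+t²)) -/
noncomputable def qfun (a b t : ℝ) : ℝ :=
  (Real.sqrt (b^2 + t^2) - Real.sqrt (a^2 + t^2)) /
    (Real.sqrt (b^2 + t^2) + Real.sqrt (a^2 + t^2))

/-- Gaussian-type bound: q(t)^α ≤ exp(-α t²(C₁ - C₂t²)) q(0)^α. -/
theorem qfun_gaussian_bound (a b : ℝ) (ha : 0 < a) (hab : a < b) (α : ℝ) (hα : 0 < α)
    (t : ℝ) (ht : 0 ≤ t) :
    qfun a b t ^ α ≤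
      Real.exp (-(α * t^2 * (1 / (2 * a * b) -
        (a^2 + a * b + b^2) / (8 * a^3 * b^3) * t^2))) * qfun a b 0 ^ α := by
  have hb : 0 < b := ha.trans hab
  set x : ℝ := t^2 with hxdef
  have hx : 0 ≤ x := sq_nonneg t
  set u := Real.sqrt (a^2+x) with hu
  set v := Real.sqrt (b^2+x) with hv
  set Q : ℝ := 1 - x/(2*a*b) + (a^2+a*b+b^2)/(8*a^3*b^3) * x^2 with hQdef
  have hau : a ≤ u := by
    nlinarith [Real.sq_sqrt (by positivity : (0:ℝ) ≤ a^2 + x),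
      Real.sqrt_nonneg (a^2+x), sq_nonneg (Real.sqrt (a^2+x) - a)]
  have hbv : b ≤ v := by
    nlinarith [Real.sq_sqrt (by positivity : (0:ℝ) ≤ b^2 + x),
      Real.sqrt_nonneg (b^2+x), sq_nonneg (Real.sqrt (b^2+x) - b)]
  have huvle : u ≤ v := by
    rw [hu, hv]; exact Real.sqrt_le_sqrt (by nlinarith)
  have hden : 0 < v + u := by linarith
  have hsq : v^2 - u^2 = b^2 - a^2 := by
    rw [hu, hv, Real.sq_sqrt (by positivity), Real.sq_sqrt (by positivity)]; ring
  have hq0 : qfun a b 0 = (b-a)/(b+a) := by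
    unfold qfun
    norm_num
    rw [Real.sqrt_sq hb.le, Real.sqrt_sq ha.le]
  have hqform : qfun a b t = (v - u)/(v + u) := by
    unfold qfun
    rw [hu, hv, hxdef]
  have hqnn : 0 ≤ qfun a b t := by
    rw [hqform]
    exact div_nonneg (by linarith) hden.le
  have hkey := key_ineq a b x ha hab hx
  rw [← hu, ← hv, ← hQdef] at hkey
  have hc : (0:ℝ) ≤ (b-a)/(b+a) := div_nonneg (by linarith) (by linarith)
  -- step 1 : qfun t ≤ (b-a)/(b+a) * Q
  have hvu : v - u ≤ b - a := by
    nlinarith [mul_nonneg (sub_nonneg.mpr huvle) (by linarith : (0:ℝ) ≤ u + v - (a+b))]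
  have hstep1 : qfun a b t ≤ (b-a)/(b+a) * Q := by
    rw [hqform, div_le_iff₀ hden]
    have h1 : (b-a)/(b+a) * (a+b) = b - a := by
      rw [div_mul_eq_mul_div, show a+b = b+a from add_comm a b,
        mul_div_assoc, div_self (by positivity : (b:ℝ)+a ≠ 0), mul_one]
    have h2 : (b-a)/(b+a) * (a+b) ≤ (b-a)/(b+a) * ((u+v)*Q) :=
      mul_le_mul_of_nonneg_left hkey hc
    calc v - u ≤ b - a := hvu
      _ = (b-a)/(b+a) * (a+b) := h1.symm
      _ ≤ (b-a)/(b+a) * ((u+v)*Q) := h2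
      _ = (b-a)/(b+a) * Q * (v+u) := by ring
  -- step 2 : Q ≤ exp (Q - 1)
  have hstep2 : Q ≤ Real.exp (-(x * (1/(2*a*b) - (a^2+a*b+b^2)/(8*a^3*b^3) * x))) := by
    have h := Real.add_one_le_exp (Q - 1)
    have harg : Q - 1 = -(x * (1/(2*a*b) - (a^2+a*b+b^2)/(8*a^3*b^3) * x)) := by
      rw [hQdef]; ring
    rw [← harg]
    linarith
  have hchain : qfun a b t ≤
      Real.exp (-(x * (1/(2*a*b) - (a^2+a*b+b^2)/(8*a^3*b^3) * x))) * ((b-a)/(b+a)) := by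
    calc qfun a b t ≤ (b-a)/(b+a) * Q := hstep1
      _ ≤ (b-a)/(b+a) * Real.exp (-(x * (1/(2*a*b) - (a^2+a*b+b^2)/(8*a^3*b^3) * x))) :=
          mul_le_mul_of_nonneg_left hstep2 hc
      _ = _ := by ring
  have hfinal := Real.rpow_le_rpow hqnn hchain hα.le
  rw [Real.mul_rpow (Real.exp_pos _).le hc] at hfinal
  rw [Real.rpow_def_of_pos (Real.exp_pos _), Real.log_exp] at hfinal
  rw [hq0]
  refine hfinal.trans_eq ?_
  congr 1
  congr 1
  rw [hxdef]
  ring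
end

section
/- Let 0 < a < b, C₁ = 1/(2ab), C₂ = (a²+ab+b²)/(8a³b³), and fix τ with 0 < τ < √(C₁/C₂). Then for any α > 0 and all t with 0 ≤ t ≤ τ, q(t)^α ≤ exp(-α t²(C₁ - τ² C₂)) · q(0)^α, where q(t) = (√(b²+t²) - √(a²+t²))/(√(b²+t²) + √(a²+t²)). Note C₁ - τ²C₂ > 0. -/
set_option maxHeartbeats 1000000 in
/-- Uniform Gaussian-type bound on [0, τ] for τ < √(C₁/C₂), with C₁ - τ²C₂ > 0. -/
theorem qfun_gaussian_bound_uniform (a b : ℝ) (ha : 0 < a) (hab : a < b) (τ : ℝ)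
    (hτ0 : 0 < τ)
    (hτ : τ < Real.sqrt ((1 / (2 * a * b)) / ((a^2 + a * b + b^2) / (8 * a^3 * b^3))))
    (α : ℝ) (hα : 0 < α) (t : ℝ) (ht0 : 0 ≤ t) (htτ : t ≤ τ) :
    qfun a b t ^ α ≤
        Real.exp (-(α * t^2 * (1 / (2 * a * b) -
          τ^2 * ((a^2 + a * b + b^2) / (8 * a^3 * b^3))))) * qfun a b 0 ^ α ∧
      0 < 1 / (2 * a * b) - τ^2 * ((a^2 + a * b + b^2) / (8 * a^3 * b^3)) := by
  have hb : 0 < b := ha.trans hab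
  set c1 : ℝ := 1 / (2 * a * b) with hc1
  set c2 : ℝ := (a^2 + a * b + b^2) / (8 * a^3 * b^3) with hc2
  have hXeq : c1 / c2 = 4*a^2*b^2 / (a^2 + a*b + b^2) := by
    rw [hc1, hc2]; field_simp; ring
  have hτsq : τ^2 < 4*a^2*b^2 / (a^2 + a*b + b^2) := by
    rw [← hXeq]
    exact (Real.lt_sqrt hτ0.le).mp hτ
  have hden : (0:ℝ) < a^2 + a*b + b^2 := by positivity
  have hτsb : τ^2 * (a^2 + a*b + b^2) < 4*a^2*b^2 := (lt_div_iff₀ hden).mp hτsq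
  have hc2pos : 0 < c2 := by rw [hc2]; positivity
  have hsecond : 0 < c1 - τ^2 * c2 := by
    have hid : c1 - τ^2 * c2 = (4*a^2*b^2 - τ^2*(a^2 + a*b + b^2)) / (8*a^3*b^3) := by
      rw [hc1, hc2]; field_simp; ring
    rw [hid]
    exact div_pos (by linarith) (by positivity)
  refine ⟨?_, hsecond⟩
  have hs0 : (0:ℝ) ≤ t^2 := sq_nonneg t
  have hst : t^2 ≤ τ^2 := pow_le_pow_left₀ ht0 htτ 2
  have hsb : t^2 * (a^2 + a*b + b^2) ≤ 4*a^2*b^2 :=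
    le_trans (mul_le_mul_of_nonneg_right hst hden.le) hτsb.le
  set A : ℝ := Real.sqrt (a^2 + t^2) with hA
  set B : ℝ := Real.sqrt (b^2 + t^2) with hB
  have hA2 : A^2 = a^2 + t^2 := Real.sq_sqrt (by positivity)
  have hB2 : B^2 = b^2 + t^2 := Real.sq_sqrt (by positivity)
  have hApos : 0 < A := by rw [hA]; positivity
  have hBpos : 0 < B := by rw [hB]; positivity
  have hABpos : 0 < A * B := mul_pos hApos hBpos
  set u : ℝ := t^2 * (c1 - τ^2 * c2) with hu
  have hu0 : 0 ≤ u := mul_nonneg hs0 hsecond.le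
  set E : ℝ := 8*a^3*b^3 with hE
  have hEpos : 0 < E := by rw [hE]; positivity
  set N₁ : ℝ := 4*a^2*b^2*t^2 - (a^2 + a*b + b^2)*t^4 with hN₁
  set N₂ : ℝ := 8*a^2*b^2*t^2 - 2*(b-a)^2*t^4 with hN₂
  set δ : ℝ := N₁ / E with hδ
  set R : ℝ := N₂ / E with hR
  have hN1nn : 0 ≤ N₁ := by
    rw [hN₁]; linarith [mul_le_mul_of_nonneg_left hsb hs0]
  have hba2 : (b-a)^2 ≤ a^2 + a*b + b^2 := by linarith [mul_pos ha hb]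
  have hN2nn : 0 ≤ N₂ := by
    rw [hN₂]
    have h1 : t^2 * (b-a)^2 ≤ 4*a^2*b^2 :=
      le_trans (mul_le_mul_of_nonneg_left hba2 hs0) hsb
    linarith [mul_le_mul_of_nonneg_left h1 hs0]
  have hδ0 : 0 ≤ δ := div_nonneg hN1nn hEpos.le
  have hR0 : 0 ≤ R := div_nonneg hN2nn hEpos.le
  have hN1lt : N₁ < E := by
    have h3ab : t^2 * (3*(a*b)) ≤ 4*a^2*b^2 := by
      refine le_trans ?_ hsb
      apply mul_le_mul_of_nonneg_left _ hs0
      linarith [sq_nonneg (a-b)]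
    have hcan : 3*(a*b) * N₁ < 3*(a*b) * E := by
      rw [hN₁, hE]
      have h4 := mul_le_mul_of_nonneg_left h3ab (by positivity : (0:ℝ) ≤ 4*a^2*b^2)
      have h5 : (0:ℝ) ≤ 3*(a*b) * ((a^2 + a*b + b^2) * t^4) := by positivity
      have h6 : (0:ℝ) < a^4*b^4 := by positivity
      linarith
    exact lt_of_mul_lt_mul_left hcan (by positivity)
  have hδlt1 : δ < 1 := by
    rw [hδ, div_lt_one hEpos]; exact hN1lt
  have huδ : u ≤ δ := by
    have hδeq : δ = t^2 * (c1 - t^2 * c2) := by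
      rw [hδ, hN₁, hE, hc1, hc2]; field_simp; ring
    rw [hu, hδeq]
    have h7 : t^2 * c2 ≤ τ^2 * c2 := mul_le_mul_of_nonneg_right hst hc2pos.le
    have h8 := mul_le_mul_of_nonneg_left h7 hs0
    linarith [h8]
  have hkey : 1 ≤ (1 - δ) * (1 + R) := by
    have hG : E^2 ≤ (E - N₁) * (E + N₂) := by
      have h1 : N₁ * N₂ ≤ (4*a^2*b^2*t^2) * (8*a^2*b^2*t^2) := by
        apply mul_le_mul _ _ hN2nn (by positivity)
        · rw [hN₁]; exact sub_le_self _ (by positivity)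
        · rw [hN₂]; exact sub_le_self _ (by positivity)
      have h2 : (4*a^2*b^2*t^2) * (8*a^2*b^2*t^2) ≤ E * (N₂ - N₁) := by
        rw [hE, hN₁, hN₂]
        have h3 : t^2 * (a^2 + b^2 - a*b) ≤ 4*a^2*b^2 := by
          refine le_trans ?_ hsb
          apply mul_le_mul_of_nonneg_left _ hs0
          linarith [mul_pos ha hb]
        have h9 := mul_le_mul_of_nonneg_left h3
          (by positivity : (0:ℝ) ≤ 8*a^3*b^3*t^2)
        linarith [h9]
      linarith [h1, h2]
    have h1δ : 1 - δ = (E - N₁)/E := by rw [hδ]; field_simp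
    have h1R : 1 + R = (E + N₂)/E := by rw [hR]; field_simp
    rw [h1δ, h1R, div_mul_div_comm, le_div_iff₀ (by positivity), one_mul]
    calc E * E = E^2 := by ring
    _ ≤ (E - N₁) * (E + N₂) := hG
  have h1δpos : 0 < 1 - δ := by linarith
  set P : ℝ := (8*a^4*b^4 + 4*a^2*b^2*(a^2+b^2)*t^2 - (b^2-a^2)^2*t^4) / E with hP
  have hPAB : P ≤ A * B := by
    set Q : ℝ := 8*a^4*b^4 + 4*a^2*b^2*(a^2+b^2)*t^2 - (b^2-a^2)^2*t^4 with hQ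
    have hkey2 : t^2 * (b^2-a^2)^2 ≤ 8*a^2*b^2*(a^2+b^2) := by
      have e1 : (0:ℝ) ≤ t^2*(a^4+2*a^3*b+6*a^2*b^2+2*a*b^3+b^4) := by positivity
      have e2 := mul_le_mul_of_nonneg_left hsb (by positivity : (0:ℝ) ≤ 2*(a^2+b^2))
      linarith [e1, e2]
    have hQ2 : Q^2 ≤ E^2 * ((a^2 + t^2) * (b^2 + t^2)) := by
      have hident : Q^2 = E^2 * ((a^2 + t^2) * (b^2 + t^2))
          - t^6 * (b^2-a^2)^2 * (8*a^2*b^2*(a^2+b^2) - (b^2-a^2)^2*t^2) := by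
        rw [hQ, hE]; ring
      have hnn : 0 ≤ t^6 * (b^2-a^2)^2 * (8*a^2*b^2*(a^2+b^2) - (b^2-a^2)^2*t^2) := by
        apply mul_nonneg (by positivity)
        linarith [hkey2]
      linarith [hident.le, hident.ge]
    by_cases hPneg : P ≤ 0
    · exact hPneg.trans hABpos.le
    · push_neg at hPneg
      have hEP : (E*P)^2 ≤ (E*(A*B))^2 := by
        have hEPQ : E * P = Q := by rw [hP, hQ]; field_simp
        rw [hEPQ]
        calc Q^2 ≤ E^2 * ((a^2+t^2)*(b^2+t^2)) := hQ2
        _ = (E*(A*B))^2 := by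
            linear_combination (-(E^2*(b^2+t^2))) * hA2 + (-(E^2*A^2)) * hB2
      have hEPpos : 0 < E * P := mul_pos hEpos hPneg
      have hEABpos : 0 < E * (A*B) := mul_pos hEpos hABpos
      have hfin : E * P ≤ E * (A*B) :=
        le_of_pow_le_pow_left₀ two_ne_zero (mul_pos hEpos hABpos).le hEP
      exact le_of_mul_le_mul_left hfin hEpos
  have hmain : Real.exp u * (a+b)^2 ≤ (A+B)^2 := by
    have hexp : Real.exp u ≤ 1/(1-δ) := by
      calc Real.exp u ≤ Real.exp δ := Real.exp_le_exp.mpr huδ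
      _ ≤ 1/(1-δ) := Real.exp_bound_div_one_sub_of_interval hδ0 hδlt1
    have hdiv : 1/(1-δ) ≤ 1 + R := by
      rw [div_le_iff₀ h1δpos]
      linarith [hkey]
    have hid4 : (1 + R) * (a+b)^2 = a^2 + b^2 + 2*t^2 + 2*P := by
      rw [hR, hP, hN₂, hE]; field_simp; ring
    calc Real.exp u * (a+b)^2 ≤ (1/(1-δ)) * (a+b)^2 :=
          mul_le_mul_of_nonneg_right hexp (by positivity)
    _ ≤ (1 + R) * (a+b)^2 := mul_le_mul_of_nonneg_right hdiv (by positivity)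
    _ = a^2 + b^2 + 2*t^2 + 2*P := hid4
    _ ≤ a^2 + b^2 + 2*t^2 + 2*(A*B) := by linarith
    _ = (A+B)^2 := by linear_combination -hA2 - hB2
  have hqt : qfun a b t = (b^2 - a^2) / (A + B)^2 := by
    rw [qfun, ← hA, ← hB, div_eq_div_iff (by positivity) (by positivity)]
    linear_combination (A + B) * hB2 - (A + B) * hA2
  have hq0 : qfun a b 0 = (b^2 - a^2) / (a + b)^2 := by
    rw [qfun]
    norm_num
    rw [Real.sqrt_sq hb.le, Real.sqrt_sq ha.le,
      div_eq_div_iff (by positivity) (by positivity)]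
    ring
  have hb2a2 : (0:ℝ) ≤ b^2 - a^2 := by
    have h10 := mul_pos (sub_pos.mpr hab) (show (0:ℝ) < b + a by linarith)
    linarith [h10]
  have hqtnn : 0 ≤ qfun a b t := by rw [hqt]; positivity
  have hqle : qfun a b t ≤ Real.exp (-u) * qfun a b 0 := by
    rw [hqt, hq0]
    have hrw : Real.exp (-u) * ((b^2-a^2)/(a+b)^2)
        = (b^2-a^2) / (Real.exp u * (a+b)^2) := by
      rw [Real.exp_neg]; field_simp
    rw [hrw]
    have h2 : (0:ℝ) < Real.exp u * (a+b)^2 := by positivity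
    apply div_le_div_of_nonneg_left hb2a2 h2
    exact hmain
  have hstep := Real.rpow_le_rpow hqtnn hqle hα.le
  calc qfun a b t ^ α ≤ (Real.exp (-u) * qfun a b 0) ^ α := hstep
  _ = Real.exp (-u) ^ α * qfun a b 0 ^ α :=
      Real.mul_rpow (Real.exp_nonneg _) (by rw [hq0]; positivity)
  _ = Real.exp (-(α * t^2 * (c1 - τ^2 * c2))) * qfun a b 0 ^ α := by
      rw [← Real.exp_mul]
      congr 1
      rw [hu]; ring
end

section
/- Let 0 < a < b. The function s(x) = √(b²+x) - √(a²+x), defined for x ≥ 0, satisfies s(x) ≤ (b-a)(1 - x/(2ab) + x²(a²+ab+b²)/(8a³b³)) for all x ≥ 0. -/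
/-!
Vary the endpoint `c` rather than `x`: `√(b² + x) - √(a² + x)` is the integral
over `c ∈ [a, b]` of `c / √(c² + x) = (1 + t)^(-1/2)` with `t = x / c²`, and the second-order
Taylor polynomial `1 - t/2 + 3t²/8` bounds `(1 + t)^(-1/2)` from above for `t ≥ 0`. That polynomial
has the primitive `c + x/(2c) - x²/(8c³)` in `c`, whose increment from `a` to `b` is exactly the
right-hand side.
-/

open Real Set

lemma div_sqrt_sq_add_le {c x : ℝ} (hc : 0 < c) (hx : 0 ≤ x) :
    c / √(c ^ 2 + x) ≤ 1 - x / (2 * c ^ 2) + 3 * x ^ 2 / (8 * c ^ 4) := by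
  set y := √(c ^ 2 + x)
  have hy2 : y ^ 2 = c ^ 2 + x := sq_sqrt (by positivity)
  have hcy : c ≤ y := le_sqrt_of_sq_le (by linarith)
  have hy : 0 < y := hc.trans_le hcy
  -- with `x = y² - c²` the claim reads `0 ≤ (y - c)³ (3y² + 9cy + 8c²)`
  have key : 0 ≤ (y - c) ^ 3 * (3 * y ^ 2 + 9 * c * y + 8 * c ^ 2) := by
    have := sub_nonneg.2 hcy; positivity
  rw [div_le_iff₀ hy, ← sub_nonneg]
  clear_value y
  obtain rfl : x = y ^ 2 - c ^ 2 := by linarith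
  convert div_nonneg key (by positivity : (0:ℝ) ≤ 8 * c ^ 4) using 1
  field_simp
  ring

lemma hasDerivAt_sqrt_sq_add {c x : ℝ} (h : c ^ 2 + x ≠ 0) :
    HasDerivAt (fun c => √(c ^ 2 + x)) (c / √(c ^ 2 + x)) c := by
  convert ((hasDerivAt_pow 2 c).add_const x).sqrt h using 1
  ring

lemma monotoneOn_sub_sqrt_sq_add {x : ℝ} (hx : 0 ≤ x) :
    MonotoneOn (fun c => c + x / (2 * c) - x ^ 2 / (8 * c ^ 3) - √(c ^ 2 + x)) (Ioi 0) := by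
  have hderiv : ∀ c ∈ Ioi (0 : ℝ), HasDerivAt
      (fun c => c + x / (2 * c) - x ^ 2 / (8 * c ^ 3) - √(c ^ 2 + x))
      (1 - x / (2 * c ^ 2) + 3 * x ^ 2 / (8 * c ^ 4) - c / √(c ^ 2 + x)) c := by
    intro c (hc : 0 < c)
    have hT : HasDerivAt (fun c => c + x / (2 * c) - x ^ 2 / (8 * c ^ 3))
        (1 - x / (2 * c ^ 2) + 3 * x ^ 2 / (8 * c ^ 4)) c := by
      have h2c : 2 * c ≠ 0 := by positivity
      have h8c : 8 * c ^ 3 ≠ 0 := by positivity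
      refine (((hasDerivAt_id' c).fun_add ((hasDerivAt_const c x).fun_div
        ((hasDerivAt_id' c).const_mul 2) h2c)).fun_sub ((hasDerivAt_const c (x ^ 2)).fun_div
        ((hasDerivAt_pow 3 c).const_mul 8) h8c)).congr_deriv ?_
      field_simp
      ring
    exact hT.sub (hasDerivAt_sqrt_sq_add (by positivity))
  refine monotoneOn_of_hasDerivWithinAt_nonneg (convex_Ioi 0)
    (fun c hc => (hderiv c hc).continuousAt.continuousWithinAt)
    (fun c hc => (hderiv c (interior_subset hc)).hasDerivWithinAt) ?_
  rw [interior_Ioi]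
  intro c (hc : 0 < c)
  exact sub_nonneg.2 (div_sqrt_sq_add_le hc hx)

/-- Taylor-type upper bound for s(x) = √(b²+x) - √(a²+x). -/
theorem sqrt_diff_taylor_bound (a b : ℝ) (ha : 0 < a) (hab : a < b) (x : ℝ) (hx : 0 ≤ x) :
    Real.sqrt (b^2 + x) - Real.sqrt (a^2 + x) ≤
      (b - a) * (1 - x / (2 * a * b) + x^2 * (a^2 + a * b + b^2) / (8 * a^3 * b^3)) := by
  have hb : 0 < b := ha.trans hab
  have hmono : a + x / (2 * a) - x ^ 2 / (8 * a ^ 3) - √(a ^ 2 + x) ≤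
      b + x / (2 * b) - x ^ 2 / (8 * b ^ 3) - √(b ^ 2 + x) :=
    monotoneOn_sub_sqrt_sq_add hx ha hb hab.le
  calc √(b ^ 2 + x) - √(a ^ 2 + x)
      ≤ (b + x / (2 * b) - x ^ 2 / (8 * b ^ 3)) - (a + x / (2 * a) - x ^ 2 / (8 * a ^ 3)) := by
        linarith
    _ = (b - a) * (1 - x / (2 * a * b) + x ^ 2 * (a ^ 2 + a * b + b ^ 2) / (8 * a ^ 3 * b ^ 3)) := by
        field_simp
        ring
end

section
/- Let A be an n×n Hermitian positive definite matrix with distinct eigenvalues λ₁ < λ₂ < ... < λ_ν (ν ≤ n). For ℓ < ν, let σ_ℓ = {λ₁,...,λ_{ν-ℓ}}, r_ℓ = λ_{ν-ℓ}/λ₁, q_ℓ = (√r_ℓ - 1)/(√r_ℓ + 1), C_ℓ = (1+√r_ℓ)²/(2λ_{ν-ℓ}). Then for all k ≥ ℓ, E_k(1/x, σ(A)) ≤ E_{k-ℓ}(1/x, σ_ℓ) ≤ C_ℓ · q_ℓ^{k+1-ℓ}, where E_k(f,S) is the best uniform polynomial approximation error of degree ≤ k on the finite set S. -/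
/-!
The error of a degree-`k` approximation of `1 / x` is `R(x) / x` with `R(0) = 1`, `deg R ≤ k + 1`.

First inequality: multiplying `R` by `R_ℓ(x) = ∏ (1 - x / λᵢ)` over the `ℓ` largest eigenvalues
kills the error there and does not increase it on `σ_ℓ`, where `|R_ℓ| ≤ 1`.

Second inequality: rescale `[λ₁, λ_{ν-ℓ}]` to `[(1 - q)², (1 + q)²]` and write
`y = 1 + q² + 2qt`, so that `t ∈ [-1, 1]`. Take `R` proportional to
`T_{m+1}(t) + 2q T_m(t) + q² T_{m-1}(t)`: on `[-1, 1]` its modulus is at most `1 + q² + 2qt = y`,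
so the error `R(y) / y` is uniformly bounded, while at the image of `y = 0` it has size
`q^(-(m+1))`.
-/

open Matrix MeasureTheory Polynomial

noncomputable def approxErr (k : ℕ) (f : ℝ → ℝ) (S : Set ℝ) : ℝ :=
  ⨅ P : {P : Polynomial ℝ // P.degree ≤ (k : ℕ)}, ⨆ x : S, |f (x : ℝ) - P.1.eval (x : ℝ)|

section ApproxErr

variable {k m : ℕ} {f g : ℝ → ℝ} {S T : Set ℝ}

theorem approxErr_le_of_forall_abs_sub_eval_le {B : ℝ} (hB : 0 ≤ B) {P : ℝ[X]}
    (hP : P.degree ≤ k) (h : ∀ x ∈ S, |f x - P.eval x| ≤ B) : approxErr k f S ≤ B := by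
  refine ciInf_le_of_le ⟨0, ?_⟩ ⟨P, hP⟩ (Real.iSup_le (fun x => h x x.2) hB)
  rintro _ ⟨Q, rfl⟩
  exact Real.iSup_nonneg fun x => abs_nonneg _

theorem approxErr_le_approxErr_of_forall_exists
    (h : ∀ Q : ℝ[X], Q.degree ≤ m → ∃ P : ℝ[X], P.degree ≤ k ∧
      ∀ x ∈ S, |f x - P.eval x| ≤ ⨆ y : T, |g y - Q.eval (y : ℝ)|) :
    approxErr k f S ≤ approxErr m g T := by
  have : Nonempty {Q : ℝ[X] // Q.degree ≤ m} := ⟨⟨0, by simp⟩⟩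
  refine le_ciInf fun Q => ?_
  obtain ⟨P, hP, hPQ⟩ := h Q.1 Q.2
  exact approxErr_le_of_forall_abs_sub_eval_le (Real.iSup_nonneg fun _ => abs_nonneg _) hP hPQ

theorem abs_sub_eval_le_iSup (hT : T.Finite) (Q : ℝ[X]) {y : ℝ} (hy : y ∈ T) :
    |g y - Q.eval y| ≤ ⨆ z : T, |g z - Q.eval (z : ℝ)| :=
  have : Finite T := hT.to_subtype
  le_ciSup (f := fun z : T => |g z - Q.eval (z : ℝ)|) (Set.finite_range _).bddAbove ⟨y, hy⟩

end ApproxErr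

section OneDivApprox

variable {K : Type*} [Field K] {R : K[X]} {ℓ : ℕ}

theorem exists_one_div_sub_eval_eq_div (hR : R.natDegree ≤ ℓ) (hR0 : R.eval 0 = 1) :
    ∃ D : K[X], D.degree < ℓ ∧ ∀ x ≠ 0, 1 / x - D.eval x = R.eval x / x := by
  obtain ⟨D, hD⟩ : X ∣ 1 - R := X_dvd_iff.mpr (by simp [coeff_zero_eq_eval_zero, hR0])
  refine ⟨D, ?_, fun x hx => ?_⟩
  · rcases eq_or_ne D 0 with rfl | hD0
    · exact WithBot.bot_lt_coe ℓ
    have : D.natDegree + 1 ≤ ℓ := by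
      rw [← natDegree_X_mul hD0, ← hD]
      exact (natDegree_sub_le _ _).trans (by simpa using hR)
    exact degree_le_natDegree.trans_lt (by exact_mod_cast this)
  · have := congrArg (eval x) hD
    simp only [eval_sub, eval_one, eval_mul, eval_X] at this
    rw [eq_div_iff hx, sub_mul, one_div_mul_cancel hx]
    linear_combination this

theorem exists_one_div_sub_eval_eq_mul {Q : K[X]} {m : ℕ} (hR : R.natDegree ≤ ℓ)
    (hR0 : R.eval 0 = 1) (hQ : Q.degree ≤ m) :
    ∃ P : K[X], P.degree ≤ ↑(ℓ + m) ∧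
      ∀ x ≠ 0, 1 / x - P.eval x = R.eval x * (1 / x - Q.eval x) := by
  obtain ⟨D, hD, hDR⟩ := exists_one_div_sub_eval_eq_div hR hR0
  refine ⟨D + R * Q, (degree_add_le _ _).trans (max_le ?_ ?_), fun x hx => ?_⟩
  · exact hD.le.trans (by exact_mod_cast Nat.le_add_right ℓ m)
  · refine (degree_mul_le _ _).trans ((add_le_add degree_le_natDegree hQ).trans ?_)
    exact_mod_cast Nat.add_le_add_right hR m
  · rw [eval_add, eval_mul, ← sub_sub, hDR x hx]
    ring

end OneDivApprox

section Deflation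

variable {K : Type*} [Field K] {ι : Type*} [Fintype ι]

noncomputable def deflationPoly (μ : ι → K) : K[X] := ∏ i, (1 - C (μ i)⁻¹ * X)

theorem natDegree_deflationPoly_le (μ : ι → K) :
    (deflationPoly μ).natDegree ≤ Fintype.card ι := by
  refine (natDegree_prod_le _ _).trans ?_
  have h (i : ι) : (1 - C (μ i)⁻¹ * X).natDegree ≤ 1 :=
    (natDegree_sub_le _ _).trans (max_le (by simp) ((natDegree_C_mul_le _ _).trans natDegree_X_le))
  simpa using Finset.sum_le_sum fun i (_ : i ∈ Finset.univ) => h i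

theorem eval_zero_deflationPoly (μ : ι → K) : (deflationPoly μ).eval 0 = 1 := by
  simp [deflationPoly, eval_prod]

theorem eval_deflationPoly_eq_zero (μ : ι → K) {i : ι} (hi : μ i ≠ 0) :
    (deflationPoly μ).eval (μ i) = 0 := by
  rw [deflationPoly, eval_prod]
  exact Finset.prod_eq_zero (Finset.mem_univ i) (by simp [inv_mul_cancel₀ hi])

theorem abs_eval_deflationPoly_le_one {μ : ι → ℝ} {x : ℝ} (hx : 0 ≤ x) (hμ : ∀ i, x ≤ μ i) :
    |(deflationPoly μ).eval x| ≤ 1 := by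
  rw [deflationPoly, eval_prod, Finset.abs_prod]
  refine Finset.prod_le_one (fun _ _ => abs_nonneg _) fun i _ => ?_
  have h0 : 0 ≤ (μ i)⁻¹ * x := mul_nonneg (inv_nonneg.mpr (hx.trans (hμ i))) hx
  have h1 : (μ i)⁻¹ * x ≤ 1 := by
    rw [inv_mul_eq_div]; exact div_le_one_of_le₀ (hμ i) (hx.trans (hμ i))
  simp only [eval_sub, eval_one, eval_mul, eval_C, eval_X]
  rw [abs_le]; constructor <;> linarith

end Deflation

theorem approxErr_one_div_le_of_deflation {S T : Set ℝ} (hT : T.Finite) {R : ℝ[X]} {ℓ : ℕ}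
    (hR : R.natDegree ≤ ℓ) (hR0 : R.eval 0 = 1) (m : ℕ)
    (hS : ∀ x ∈ S, x ≠ 0 ∧ (R.eval x = 0 ∨ x ∈ T ∧ |R.eval x| ≤ 1)) :
    approxErr (ℓ + m) (fun x => 1 / x) S ≤ approxErr m (fun x => 1 / x) T := by
  refine approxErr_le_approxErr_of_forall_exists fun Q hQ => ?_
  obtain ⟨P, hP, hPQ⟩ := exists_one_div_sub_eval_eq_mul hR hR0 hQ
  refine ⟨P, hP, fun x hx => ?_⟩
  obtain ⟨hx0, hRx | ⟨hxT, hRx⟩⟩ := hS x hx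
  · rw [hPQ x hx0, hRx, zero_mul, abs_zero]
    exact Real.iSup_nonneg fun _ => abs_nonneg _
  · rw [hPQ x hx0, abs_mul]
    exact (mul_le_of_le_one_left (abs_nonneg _) hRx).trans (abs_sub_eval_le_iSup hT Q hxT)

namespace Polynomial.Chebyshev

theorem T_eval_half_add_inv {K : Type*} [Field K] [NeZero (2 : K)] {w : K} (hw : w ≠ 0)
    (n : ℤ) : (T K n).eval ((w + w⁻¹) / 2) = (w ^ n + w ^ (-n)) / 2 := by
  induction n using Polynomial.Chebyshev.induct' with
  | zero => simp [add_self_div_two]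
  | one => simp
  | add_two n ih₁ ih₀ =>
    rw [T_add_two]
    simp only [eval_sub, eval_mul, eval_X, eval_ofNat, ih₁, ih₀]
    simp only [_root_.zpow_neg, zpow_add₀ hw, zpow_natCast, zpow_ofNat]
    field_simp
    ring
  | neg n ih => rw [T_neg, ih, neg_neg, add_comm]

end Polynomial.Chebyshev

section Chebyshev

open Real
open Polynomial.Chebyshev (T natDegree_T T_real_cos T_eval_half_add_inv)

theorem abs_cos_add_two_mul_cos_add_sq_mul_cos_sub_le (q θ φ : ℝ) :
    |cos (φ + θ) + 2 * q * cos φ + q ^ 2 * cos (φ - θ)| ≤ 1 + q ^ 2 + 2 * q * cos θ := by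
  set A := (1 + q ^ 2) * cos θ + 2 * q
  set B := (1 - q ^ 2) * sin θ
  have hAB : cos (φ + θ) + 2 * q * cos φ + q ^ 2 * cos (φ - θ) = A * cos φ - B * sin φ := by
    rw [cos_add, cos_sub]; ring
  have hsq : A ^ 2 + B ^ 2 = (1 + q ^ 2 + 2 * q * cos θ) ^ 2 := by
    linear_combination (1 - q ^ 2) ^ 2 * sin_sq_add_cos_sq θ
  have hnonneg : 0 ≤ 1 + q ^ 2 + 2 * q * cos θ := by
    nlinarith [sin_sq_add_cos_sq θ, sq_nonneg (q + cos θ), sq_nonneg (sin θ)]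
  rw [hAB]
  refine abs_le_of_sq_le_sq ?_ hnonneg
  -- Cauchy–Schwarz for `(A, -B)` and `(cos φ, sin φ)`.
  nlinarith [sq_nonneg (A * sin φ + B * cos φ), sin_sq_add_cos_sq φ]

/-- At `t = (z + z⁻¹) / 2` this is the average of `z^(m-1) (z + q)²` and its image under
`z ↦ z⁻¹`. -/
noncomputable def chebyshevSq (q : ℝ) (m : ℤ) : ℝ[X] :=
  T ℝ (m + 1) + C (2 * q) * T ℝ m + C (q ^ 2) * T ℝ (m - 1)

theorem natDegree_chebyshevSq_le (q : ℝ) (m : ℕ) : (chebyshevSq q m).natDegree ≤ m + 1 := by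
  have h (n : ℤ) (c : ℝ) (hn : n.natAbs ≤ m + 1) : (C c * T ℝ n).natDegree ≤ m + 1 :=
    (natDegree_C_mul_le _ _).trans ((natDegree_T ℝ n).trans_le hn)
  refine (natDegree_add_le _ _).trans (max_le ((natDegree_add_le _ _).trans (max_le ?_ ?_)) ?_)
  · simpa using h (m + 1) 1 (by omega)
  · exact h m _ (by omega)
  · exact h (m - 1) _ (by omega)

theorem abs_eval_chebyshevSq_le (q : ℝ) (m : ℤ) {t : ℝ} (ht : t ∈ Set.Icc (-1) 1) :
    |(chebyshevSq q m).eval t| ≤ 1 + q ^ 2 + 2 * q * t := by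
  obtain ⟨θ, rfl⟩ : ∃ θ, cos θ = t := ⟨arccos t, cos_arccos ht.1 ht.2⟩
  have := abs_cos_add_two_mul_cos_add_sq_mul_cos_sub_le q θ (m * θ)
  simp only [chebyshevSq, eval_add, eval_mul, eval_C, T_real_cos]
  push_cast
  rwa [add_one_mul, sub_one_mul]

theorem eval_chebyshevSq_neg_half_add_inv {q : ℝ} (hq : q ≠ 0) (m : ℕ) :
    (chebyshevSq q m).eval (-(q + q⁻¹) / 2) = (1 - q ^ 2) ^ 2 / (2 * (-q) ^ (m + 1)) := by
  have hq' : -q ≠ 0 := neg_ne_zero.mpr hq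
  rw [show -(q + q⁻¹) = -q + (-q)⁻¹ by rw [inv_neg]; ring]
  simp only [chebyshevSq, eval_add, eval_mul, eval_C, T_eval_half_add_inv hq']
  simp only [_root_.zpow_neg, zpow_add₀ hq', zpow_sub₀ hq', zpow_natCast, zpow_one]
  field_simp
  ring

theorem exists_eval_zero_eq_one_abs_eval_le {q : ℝ} (hq0 : 0 < q) (hq1 : q < 1) (m : ℕ) :
    ∃ R : ℝ[X], R.natDegree ≤ m + 1 ∧ R.eval 0 = 1 ∧
      ∀ y ∈ Set.Icc ((1 - q) ^ 2) ((1 + q) ^ 2),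
        |R.eval y| ≤ 2 * q ^ (m + 1) / (1 - q ^ 2) ^ 2 * y := by
  set L : ℝ[X] := C (2 * q)⁻¹ * (X - C (1 + q ^ 2))
  have hL (y : ℝ) : L.eval y = (y - (1 + q ^ 2)) / (2 * q) := by
    simp only [L, eval_mul, eval_C, eval_sub, eval_X]; ring
  have hL0 : L.eval 0 = -(q + q⁻¹) / 2 := by rw [hL]; field_simp; ring
  have h1q : 1 - q ^ 2 ≠ 0 := by nlinarith
  set e := (chebyshevSq q m).eval (L.eval 0) with he_def
  have he : e = (1 - q ^ 2) ^ 2 / (2 * (-q) ^ (m + 1)) := by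
    rw [he_def, hL0, eval_chebyshevSq_neg_half_add_inv hq0.ne']
  have he0 : e ≠ 0 := by
    rw [he]; exact div_ne_zero (pow_ne_zero _ h1q) (by simp [hq0.ne'])
  have he_inv : |e|⁻¹ = 2 * q ^ (m + 1) / (1 - q ^ 2) ^ 2 := by
    rw [he, abs_div, abs_mul, abs_pow, abs_pow, abs_neg, abs_of_pos hq0, sq_abs, abs_two, inv_div]
  refine ⟨C e⁻¹ * (chebyshevSq q m).comp L, ?_, ?_, fun y hy => ?_⟩
  · refine (natDegree_C_mul_le _ _).trans (natDegree_comp_le.trans ?_)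
    have : L.natDegree ≤ 1 := (natDegree_C_mul_le _ _).trans (natDegree_X_sub_C _).le
    simpa using Nat.mul_le_mul (natDegree_chebyshevSq_le q m) this
  · rw [eval_mul, eval_C, eval_comp, inv_mul_cancel₀ he0]
  · have hLy : L.eval y ∈ Set.Icc (-1) 1 := by
      rw [hL, Set.mem_Icc, le_div_iff₀ (by positivity), div_le_iff₀ (by positivity)]
      constructor <;> nlinarith [hy.1, hy.2]
    have hbound : |(chebyshevSq q m).eval (L.eval y)| ≤ y :=
      (abs_eval_chebyshevSq_le q m hLy).trans_eq (by rw [hL]; field_simp; ring)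
    rw [eval_mul, eval_C, eval_comp, abs_mul, abs_inv, he_inv]
    exact mul_le_mul_of_nonneg_left hbound (by positivity)

theorem exists_abs_one_div_sub_eval_le {a b : ℝ} (ha : 0 < a) (hab : a ≤ b) (m : ℕ) :
    ∃ P : ℝ[X], P.degree ≤ m ∧ ∀ x ∈ Set.Icc a b, |1 / x - P.eval x| ≤
      (1 + √(b / a)) ^ 2 / (2 * b) * ((√(b / a) - 1) / (√(b / a) + 1)) ^ (m + 1) := by
  rcases hab.eq_or_lt with rfl | hab
  · refine ⟨C a⁻¹, degree_C_le.trans (by exact_mod_cast m.zero_le), fun x hx => ?_⟩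
    obtain rfl : x = a := le_antisymm hx.2 hx.1
    simp [div_self ha.ne']
  set s := √(b / a)
  have hs : 1 < s := lt_sqrt_of_sq_lt (by rw [one_pow, one_lt_div ha]; exact hab)
  have hb : b = a * s ^ 2 := by rw [sq_sqrt (div_pos (ha.trans hab) ha).le]; field_simp
  set q := (s - 1) / (s + 1)
  have hq0 : 0 < q := div_pos (by linarith) (by linarith)
  have hq1 : q < 1 := (div_lt_one (by linarith)).mpr (by linarith)
  have hqs : (1 - q) * s = 1 + q := by simp only [q]; field_simp; ring
  obtain ⟨R, hRdeg, hR0, hR⟩ := exists_eval_zero_eq_one_abs_eval_le hq0 hq1 m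
  set c := (1 - q) ^ 2 / a
  have hRc : (R.comp (C c * X)).natDegree ≤ m + 1 := by
    refine natDegree_comp_le.trans ?_
    simpa using Nat.mul_le_mul hRdeg ((natDegree_C_mul_le _ _).trans natDegree_X_le)
  obtain ⟨D, hD, hDR⟩ := exists_one_div_sub_eval_eq_div hRc (by simp [hR0])
  refine ⟨D, Order.le_of_lt_succ hD, fun x hx => ?_⟩
  have hx0 : 0 < x := ha.trans_le hx.1
  have hca : c * a = (1 - q) ^ 2 := by simp only [c]; field_simp
  have hcb : c * b = (1 + q) ^ 2 := by rw [hb, ← hqs]; simp only [c]; field_simp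
  have hcx : c * x ∈ Set.Icc ((1 - q) ^ 2) ((1 + q) ^ 2) := by
    rw [← hca, ← hcb]
    exact ⟨by gcongr; exact hx.1, by gcongr; exact hx.2⟩
  rw [hDR x hx0.ne', eval_comp, eval_mul, eval_C, eval_X, abs_div, abs_of_pos hx0,
    div_le_iff₀ hx0]
  refine (hR _ hcx).trans_eq ?_
  have h1q : 1 - q ≠ 0 := by linarith
  have h2 : (1 - q) * (1 + s) = 2 := by linear_combination hqs
  rw [show 1 - q ^ 2 = (1 - q) * (1 + q) by ring, ← hqs, hb]
  simp only [c]
  field_simp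
  linear_combination (-((1 - q) * (1 + s) + 2)) * h2

theorem approxErr_one_div_le_of_subset_Icc {a b : ℝ} (ha : 0 < a) (hab : a ≤ b) {S : Set ℝ}
    (hS : S ⊆ Set.Icc a b) (m : ℕ) :
    approxErr m (fun x => 1 / x) S ≤
      (1 + √(b / a)) ^ 2 / (2 * b) * ((√(b / a) - 1) / (√(b / a) + 1)) ^ (m + 1) := by
  obtain ⟨P, hP, hPerr⟩ := exists_abs_one_div_sub_eval_le ha hab m
  exact approxErr_le_of_forall_abs_sub_eval_le ((abs_nonneg _).trans (hPerr a ⟨le_rfl, hab⟩)) hP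
    fun x hx => hPerr x (hS hx)

end Chebyshev

theorem approxErr_one_div_range_le_of_strictMono {ν ℓ : ℕ} {lam : Fin ν → ℝ}
    (hmono : StrictMono lam) (hpos : ∀ i, 0 < lam i) (hℓ : ℓ ≤ ν) (m : ℕ) :
    approxErr (ℓ + m) (fun x => 1 / x) (Set.range lam) ≤
      approxErr m (fun x => 1 / x) (lam '' {i : Fin ν | (i : ℕ) < ν - ℓ}) := by
  let top (j : Fin ℓ) : Fin ν := ⟨ν - ℓ + j, by omega⟩
  refine approxErr_one_div_le_of_deflation ((Set.toFinite _).image lam)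
    ((natDegree_deflationPoly_le (lam ∘ top)).trans_eq (Fintype.card_fin ℓ))
    (eval_zero_deflationPoly _) m ?_
  rintro _ ⟨i, rfl⟩
  refine ⟨(hpos i).ne', ?_⟩
  by_cases hi : (i : ℕ) < ν - ℓ
  · refine .inr ⟨⟨i, hi, rfl⟩, abs_eval_deflationPoly_le_one (hpos i).le fun j => ?_⟩
    exact hmono.monotone (Fin.le_iff_val_le_val.mpr (by dsimp [top]; omega))
  · have hi_top : top ⟨i - (ν - ℓ), by omega⟩ = i := Fin.ext (by dsimp [top]; omega)
    left
    rw [← hi_top]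
    exact eval_deflationPoly_eq_zero (lam ∘ top) (hpos _).ne'

/-- Superlinear polynomial approximation bound for 1/x on the spectrum of a
Hermitian positive definite matrix with distinct eigenvalues λ₁ < ... < λ_ν. -/
theorem inverse_approx_superlinear {n ν : ℕ} (A : Matrix (Fin n) (Fin n) ℂ)
    (hA : A.IsHermitian) (hPD : ∀ i, 0 < hA.eigenvalues i)
    (lam : Fin ν → ℝ) (hmono : StrictMono lam)
    (hspec : Set.range hA.eigenvalues = Set.range lam)
    (ℓ k : ℕ) (hℓ : ℓ < ν) (hk : ℓ ≤ k) :
    approxErr k (fun x => 1 / x) (Set.range hA.eigenvalues) ≤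
        approxErr (k - ℓ) (fun x => 1 / x) (lam '' {i : Fin ν | (i : ℕ) < ν - ℓ}) ∧
      approxErr (k - ℓ) (fun x => 1 / x) (lam '' {i : Fin ν | (i : ℕ) < ν - ℓ}) ≤
        (1 + Real.sqrt (lam ⟨ν - ℓ - 1, by omega⟩ / lam ⟨0, by omega⟩))^2 /
            (2 * lam ⟨ν - ℓ - 1, by omega⟩) *
          ((Real.sqrt (lam ⟨ν - ℓ - 1, by omega⟩ / lam ⟨0, by omega⟩) - 1) /
              (Real.sqrt (lam ⟨ν - ℓ - 1, by omega⟩ / lam ⟨0, by omega⟩) + 1)) ^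
            (k + 1 - ℓ) := by
  have hlam_pos (i : Fin ν) : 0 < lam i := by
    obtain ⟨j, hj⟩ : lam i ∈ Set.range hA.eigenvalues := hspec ▸ Set.mem_range_self i
    exact hj ▸ hPD j
  constructor
  · have h := approxErr_one_div_range_le_of_strictMono hmono hlam_pos hℓ.le (k - ℓ)
    rwa [Nat.add_sub_cancel' hk, ← hspec] at h
  · rw [show k + 1 - ℓ = k - ℓ + 1 by omega]
    refine approxErr_one_div_le_of_subset_Icc (hlam_pos _)
      (hmono.monotone (Fin.mk_le_mk.mpr (Nat.zero_le _))) ?_ (k - ℓ)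
    rintro _ ⟨i, hi : (i : ℕ) < ν - ℓ, rfl⟩
    exact ⟨hmono.monotone (Fin.mk_le_mk.mpr (Nat.zero_le _)),
      hmono.monotone (Fin.mk_le_mk.mpr (by omega))⟩
end
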